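/- The closure of the set of points ( hom(C_8;G)/hom(C_4;G)^2, hom(C_{12};G)/hom(C_4;G)^3, ..., hom(C_{4ℓ};G)/hom(C_4;G)^ℓ ) over all finite simple graphs G with hom(C_4;G) ≠ 0 equals the power-sum profile Π_ℓ, i.e., the closure of { (p_2(x),...,p_ℓ(x)) : x ∈ ℝ^n_{≥0} for some n, with p_1(x)=1 }. -/

import Mathlib

open SimpleGraph

/-- The number of graph homomorphisms from `H` to `G`. -/
noncomputable def homCount {α β : Type*} (H : SimpleGraph α) (G : SimpleGraph β) : ℕ :=
  Nat.card (H →g G)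

/-- The power-sum profile `Π_ℓ`: the closure of all vectors `(p_2(x), …, p_ℓ(x))`
over nonnegative `x ∈ ℝ^n` (any `n`) with `p_1(x) = 1`. -/
def powerSumProfile (ℓ : ℕ) : Set (Fin (ℓ - 1) → ℝ) :=
  closure {v | ∃ (n : ℕ) (x : Fin n → ℝ), (∀ i, 0 ≤ x i) ∧ (∑ i, x i) = 1 ∧
    ∀ j : Fin (ℓ - 1), v j = ∑ i, x i ^ ((j : ℕ) + 2)}

/-!
For `m ≥ 2`, `hom(C_m; G) = tr A^m = ∑_w λ_w^m`, where `λ` are the adjacency eigenvalues of `G`.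
Hence `x_w = λ_w^4 / hom(C_4; G)` is a nonnegative vector with `p_1(x) = 1` and
`p_j(x) = hom(C_{4j}; G) / hom(C_4; G)^j`: every graph point is a power-sum point.

Conversely, for nonnegative `x` with `p_1(x) = 1` put `t_i = x_i^{1/4}` and take the disjoint union
of the cliques `K_{d_i + 1}`, `d_i = ⌊t_i N⌋`. Since `A(K_{d+1}) = J - 1`, for even `m` it has
`hom(C_m) = ∑_i (d_i^m + d_i) = N^m ∑_i t_i^m + o(N^m)`, so as `N → ∞` its cycle ratios tend to
`∑_i t_i^{4j} / (∑_i t_i^4)^j = p_j(x)`.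
-/

open Filter Topology

theorem Fin.snoc_tail_zero_apply {α : Type*} {m : ℕ} (f : Fin (m + 1) → α) (i : Fin (m + 1)) :
    (Fin.snoc (Fin.tail f) (f 0) : Fin (m + 1) → α) i = f (i + 1) := by
  induction i using Fin.lastCases with
  | last => simp
  | cast j => simp [Fin.tail, Fin.coeSucc_eq_succ]

namespace Matrix

variable {V R : Type*} [Fintype V] [DecidableEq V] [CommSemiring R]

theorem pow_succ_apply_eq_sum_prod (A : Matrix V V R) (m : ℕ) (u v : V) :
    (A ^ (m + 1)) u v = ∑ g : Fin m → V, ∏ i : Fin (m + 1),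
      A ((Fin.cons u g : Fin (m + 1) → V) i) ((Fin.snoc g v : Fin (m + 1) → V) i) := by
  induction m generalizing v with
  | zero => simp [Fin.snoc]
  | succ m ih =>
    rw [pow_succ, mul_apply]
    simp_rw [ih, Finset.sum_mul]
    rw [← Fintype.sum_prod_type']
    refine Fintype.sum_equiv (Fin.snocEquiv fun _ => V) _ _ fun ⟨w, g⟩ => ?_
    simp [Fin.snocEquiv, Fin.prod_univ_castSucc, Fin.cons_snoc_eq_snoc_cons]

theorem trace_pow_succ_eq_sum_prod (A : Matrix V V R) (m : ℕ) :
    trace (A ^ (m + 1)) = ∑ f : Fin (m + 1) → V, ∏ i, A (f i) (f (i + 1)) := by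
  simp_rw [trace, diag_apply, pow_succ_apply_eq_sum_prod, ← Fintype.sum_prod_type']
  refine Fintype.sum_equiv (Fin.consEquiv fun _ => V) _ _ fun ⟨u, g⟩ => ?_
  simp [Fin.consEquiv, ← Fin.snoc_tail_zero_apply]

theorem IsHermitian.trace_pow_eq_sum_eigenvalues_pow {𝕜 : Type*} [RCLike 𝕜] {A : Matrix V V 𝕜}
    (hA : A.IsHermitian) (m : ℕ) : (A ^ m).trace = ∑ i, (hA.eigenvalues i : 𝕜) ^ m := by
  conv_lhs => rw [hA.spectral_theorem, ← map_pow, Unitary.conjStarAlgAut_apply, trace_mul_cycle,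
    Unitary.coe_star_mul_self, one_mul, diagonal_pow, trace_diagonal]
  simp

end Matrix

section

variable {V : Type*}

def cycleGraphHomEquiv (G : SimpleGraph V) (m : ℕ) :
    (cycleGraph (m + 2) →g G) ≃ {f : Fin (m + 2) → V // ∀ i, G.Adj (f i) (f (i + 1))} where
  toFun φ := ⟨φ, fun i => φ.map_adj (cycleGraph_adj.mpr (Or.inr (add_sub_cancel_left i 1)))⟩
  invFun f := ⟨f.1, fun {u v} h => by
    rcases cycleGraph_adj.mp h with h | h
    · obtain rfl := eq_add_of_sub_eq' h
      exact (f.2 v).symm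
    · obtain rfl := eq_add_of_sub_eq' h
      exact f.2 u⟩

theorem homCount_cycleGraph_eq_trace {R : Type*} [CommSemiring R] [Fintype V] [DecidableEq V]
    (G : SimpleGraph V) [DecidableRel G.Adj] {m : ℕ} (hm : 2 ≤ m) :
    (homCount (cycleGraph m) G : R) = (G.adjMatrix R ^ m).trace := by
  obtain ⟨k, rfl⟩ := Nat.exists_eq_add_of_le' hm
  rw [homCount, Nat.card_congr (cycleGraphHomEquiv G k), Nat.card_eq_fintype_card,
    Fintype.card_subtype, Matrix.trace_pow_succ_eq_sum_prod]
  simp [adjMatrix_apply, Finset.prod_boole, Finset.sum_boole]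

end

def cliqueUnion {ι : Type*} (c : ι → ℕ) : SimpleGraph (Σ i, Fin (c i)) where
  Adj a b := a.1 = b.1 ∧ a ≠ b
  symm := ⟨fun _ _ h => ⟨h.1.symm, h.2.symm⟩⟩
  loopless := ⟨fun _ h => h.2 rfl⟩

instance {ι : Type*} [DecidableEq ι] (c : ι → ℕ) : DecidableRel (cliqueUnion c).Adj :=
  fun a b => inferInstanceAs (Decidable (a.1 = b.1 ∧ a ≠ b))

theorem adjMatrix_cliqueUnion {ι R : Type*} [DecidableEq ι] [Semiring R] (c : ι → ℕ) :
    (cliqueUnion c).adjMatrix R =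
      Matrix.blockDiagonal' fun i => (⊤ : SimpleGraph (Fin (c i))).adjMatrix R := by
  ext ⟨i, x⟩ ⟨j, y⟩
  rw [adjMatrix_apply]
  by_cases hij : i = j
  · subst hij
    simp [cliqueUnion]
  · simp [cliqueUnion, hij, Matrix.blockDiagonal'_apply_ne]

theorem homCount_cycleGraph_top {R : Type*} [CommRing R] (d : ℕ) {m : ℕ} (hm : 2 ≤ m) :
    (homCount (cycleGraph m) (⊤ : SimpleGraph (Fin (d + 1))) : R) = d ^ m + (-1) ^ m * d := by
  set J : Matrix (Fin (d + 1)) (Fin (d + 1)) R := Matrix.of fun _ _ => 1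
  have hJJ : J * J = ((d : R) + 1) • J := by
    ext; simp [J, Matrix.mul_apply]
  have hJ : J.trace = d + 1 := by
    simp [J, Matrix.trace]
  have hA : (⊤ : SimpleGraph (Fin (d + 1))).adjMatrix R = J - 1 := by
    ext u v; by_cases h : u = v <;> simp [J, h]
  -- `a = (d ^ k - (-1) ^ k) / (d + 1)`, kept free of division since `d + 1` need not be a unit
  have hpow : ∀ k : ℕ, ∃ a : R, (J - 1) ^ k = a • J + (-1 : R) ^ k • 1 ∧
      a * (d + 1) = d ^ k - (-1) ^ k := by
    intro k
    induction k with
    | zero => exact ⟨0, by simp⟩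
    | succ k ih =>
      obtain ⟨a, hk, ha⟩ := ih
      refine ⟨a * d + (-1) ^ k, ?_, by linear_combination (d : R) * ha⟩
      rw [pow_succ, hk, add_mul, Matrix.smul_mul, Matrix.smul_mul, Matrix.mul_sub, Matrix.mul_sub,
        hJJ, Matrix.one_mul, Matrix.mul_one, Matrix.one_mul]
      module
  obtain ⟨a, hk, ha⟩ := hpow m
  rw [homCount_cycleGraph_eq_trace _ hm, hA, hk, Matrix.trace_add, Matrix.trace_smul,
    Matrix.trace_smul, Matrix.trace_one, hJ, Fintype.card_fin, smul_eq_mul, smul_eq_mul]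
  push_cast
  linear_combination ha

section CliqueUnion

variable {ι : Type*} [Fintype ι] [DecidableEq ι]

theorem homCount_cycleGraph_cliqueUnion {R : Type*} [CommRing R] (d : ι → ℕ) {m : ℕ} (hm : 2 ≤ m)
    (hme : Even m) :
    (homCount (cycleGraph m) (cliqueUnion fun i => d i + 1) : R) = ∑ i, ((d i : R) ^ m + d i) := by
  rw [homCount_cycleGraph_eq_trace _ hm, adjMatrix_cliqueUnion, ← Matrix.blockDiagonal'_pow,
    Matrix.trace_blockDiagonal']
  refine Finset.sum_congr rfl fun i _ => ?_
  rw [Pi.pow_apply, ← homCount_cycleGraph_eq_trace _ hm, homCount_cycleGraph_top _ hm,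
    hme.neg_one_pow, one_mul]

theorem tendsto_homCount_cycleGraph_cliqueUnion_div {t : ι → ℝ} (ht : ∀ i, 0 ≤ t i) {m : ℕ}
    (hm : 2 ≤ m) (hme : Even m) :
    Tendsto (fun N : ℕ => (homCount (cycleGraph m) (cliqueUnion fun i => ⌊t i * N⌋₊ + 1) : ℝ) /
      (N : ℝ) ^ m) atTop (𝓝 (∑ i, t i ^ m)) := by
  simp_rw [homCount_cycleGraph_cliqueUnion _ hm hme, Finset.sum_div]
  refine tendsto_finsetSum _ fun i _ => ?_
  have hratio : Tendsto (fun N : ℕ => (⌊t i * N⌋₊ : ℝ) / N) atTop (𝓝 (t i)) :=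
    (tendsto_nat_floor_mul_div_atTop (ht i)).comp tendsto_natCast_atTop_atTop
  have hsmall : Tendsto (fun N : ℕ => (⌊t i * N⌋₊ : ℝ) / N / (N : ℝ) ^ (m - 1)) atTop (𝓝 0) :=
    hratio.div_atTop ((tendsto_pow_atTop (by omega)).comp tendsto_natCast_atTop_atTop)
  rw [← add_zero (t i ^ m)]
  refine ((hratio.pow m).add hsmall).congr fun N => ?_
  rw [add_div, div_pow, div_div, ← pow_succ', Nat.sub_add_cancel (by omega)]

theorem eventually_homCount_cycleGraph_four_cliqueUnion_ne_zero {t : ι → ℝ} (ht : ∀ i, 0 ≤ t i)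
    (ht4 : ∑ i, t i ^ 4 = 1) :
    ∀ᶠ N : ℕ in atTop, homCount (cycleGraph 4) (cliqueUnion fun i => ⌊t i * N⌋₊ + 1) ≠ 0 := by
  have h4 := tendsto_homCount_cycleGraph_cliqueUnion_div ht (m := 4) (by norm_num) (by decide)
  rw [ht4] at h4
  filter_upwards [h4.eventually_ne one_ne_zero] with N hN h0
  simp [h0] at hN

noncomputable def cycleHomRatio {V : Type*} (G : SimpleGraph V) (p : ℕ) : ℝ :=
  (homCount (cycleGraph (4 * p)) G : ℝ) / (homCount (cycleGraph 4) G : ℝ) ^ p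

theorem tendsto_cycleHomRatio_cliqueUnion {t : ι → ℝ} (ht : ∀ i, 0 ≤ t i)
    (ht4 : ∑ i, t i ^ 4 = 1) {p : ℕ} (hp : 1 ≤ p) :
    Tendsto (fun N : ℕ => cycleHomRatio (cliqueUnion fun i => ⌊t i * N⌋₊ + 1) p)
      atTop (𝓝 (∑ i, t i ^ (4 * p))) := by
  have h4 := tendsto_homCount_cycleGraph_cliqueUnion_div ht (m := 4) (by norm_num) (by decide)
  rw [ht4] at h4
  have h4p := tendsto_homCount_cycleGraph_cliqueUnion_div ht (m := 4 * p) (by omega)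
    ⟨2 * p, by ring⟩
  have hquot := h4p.div (h4.pow p) (by simp)
  rw [one_pow, div_one] at hquot
  refine hquot.congr' ?_
  filter_upwards [eventually_ne_atTop 0] with N hN
  rw [Pi.div_apply, div_pow, ← pow_mul, div_div_div_cancel_right₀ (by positivity), cycleHomRatio]

end CliqueUnion

theorem exists_nonneg_sum_pow_eq_cycleHomRatio {V : Type*} [Fintype V] (G : SimpleGraph V)
    (hG : homCount (cycleGraph 4) G ≠ 0) :
    ∃ x : V → ℝ, (∀ w, 0 ≤ x w) ∧ ∑ w, x w = 1 ∧
      ∀ p, 1 ≤ p → ∑ w, x w ^ p = cycleHomRatio G p := by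
  classical
  have hA : (G.adjMatrix ℝ).IsHermitian := Matrix.isHermitian_iff_isSymm.mpr G.isSymm_adjMatrix
  have hcycle : ∀ p, 1 ≤ p →
      (homCount (cycleGraph (4 * p)) G : ℝ) = ∑ w, (hA.eigenvalues w ^ 4) ^ p := by
    intro p hp
    simp_rw [homCount_cycleGraph_eq_trace G (by omega : 2 ≤ 4 * p),
      hA.trace_pow_eq_sum_eigenvalues_pow, ← pow_mul]
    rfl
  have hsum : ∀ p, 1 ≤ p → ∑ w, (hA.eigenvalues w ^ 4 / homCount (cycleGraph 4) G) ^ p =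
      cycleHomRatio G p := by
    intro p hp
    simp_rw [div_pow, ← Finset.sum_div, ← hcycle p hp, cycleHomRatio]
  refine ⟨fun w => hA.eigenvalues w ^ 4 / homCount (cycleGraph 4) G, fun w => by positivity,
    ?_, hsum⟩
  simpa [cycleHomRatio, hG] using hsum 1 le_rfl

def cycleRatioPoints (ℓ : ℕ) : Set (Fin (ℓ - 1) → ℝ) :=
  {v | ∃ (V : Type) (_ : Fintype V) (G : SimpleGraph V), homCount (cycleGraph 4) G ≠ 0 ∧
    ∀ j : Fin (ℓ - 1), v j = cycleHomRatio G ((j : ℕ) + 2)}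

def powerSumPoints (ℓ : ℕ) : Set (Fin (ℓ - 1) → ℝ) :=
  {v | ∃ (n : ℕ) (x : Fin n → ℝ), (∀ i, 0 ≤ x i) ∧ (∑ i, x i) = 1 ∧
    ∀ j : Fin (ℓ - 1), v j = ∑ i, x i ^ ((j : ℕ) + 2)}

theorem cycleRatioPoints_subset_powerSumPoints (ℓ : ℕ) :
    cycleRatioPoints ℓ ⊆ powerSumPoints ℓ := by
  rintro v ⟨V, _, G, hG, hv⟩
  obtain ⟨x, hx0, hx1, hx⟩ := exists_nonneg_sum_pow_eq_cycleHomRatio G hG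
  let e := (Fintype.equivFin V).symm
  refine ⟨Fintype.card V, fun i => x (e i), fun i => hx0 (e i), by rwa [e.sum_comp x], fun j => ?_⟩
  rw [hv j, ← hx _ (by omega), ← e.sum_comp]

theorem powerSumPoints_subset_closure_cycleRatioPoints (ℓ : ℕ) :
    powerSumPoints ℓ ⊆ closure (cycleRatioPoints ℓ) := by
  rintro v ⟨n, x, hx0, hx1, hv⟩
  set t : Fin n → ℝ := fun i => x i ^ (4 : ℝ)⁻¹
  have ht0 : ∀ i, 0 ≤ t i := fun i => Real.rpow_nonneg (hx0 i) _
  have ht4 : ∀ i, t i ^ 4 = x i := fun i => Real.rpow_inv_natCast_pow (hx0 i) four_ne_zero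
  have ht4_sum : ∑ i, t i ^ 4 = 1 := by simpa [ht4] using hx1
  refine mem_closure_of_tendsto (tendsto_pi_nhds.mpr fun j => ?_)
    ((eventually_homCount_cycleGraph_four_cliqueUnion_ne_zero ht0 ht4_sum).mono
      fun N hN => ⟨_, inferInstance, _, hN, fun j => rfl⟩)
  simpa [hv, pow_mul, ht4] using
    tendsto_cycleHomRatio_cliqueUnion ht0 ht4_sum (by omega : 1 ≤ (j : ℕ) + 2)

theorem cycle_ratio_profile_eq_powerSumProfile_general (ℓ : ℕ) :
    closure {v : Fin (ℓ - 1) → ℝ | ∃ (V : Type) (_ : Fintype V) (G : SimpleGraph V),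
        homCount (cycleGraph 4) G ≠ 0 ∧
        ∀ j : Fin (ℓ - 1), v j =
          (homCount (cycleGraph (4 * ((j : ℕ) + 2))) G : ℝ) /
            (homCount (cycleGraph 4) G : ℝ) ^ ((j : ℕ) + 2)} = powerSumProfile ℓ :=
  (closure_mono (cycleRatioPoints_subset_powerSumPoints ℓ)).antisymm
    (closure_minimal (powerSumPoints_subset_closure_cycleRatioPoints ℓ) isClosed_closure)

/-- The cycle ratio profile: the closure of the points
`(hom(C_8;G)/hom(C_4;G)^2, …, hom(C_{4ℓ};G)/hom(C_4;G)^ℓ)` over all finite simple graphs `G`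
with `hom(C_4;G) ≠ 0` equals the power-sum profile `Π_ℓ`. -/
theorem cycle_ratio_profile_eq_powerSumProfile (ℓ : ℕ) (hℓ : 2 ≤ ℓ) :
    closure {v : Fin (ℓ - 1) → ℝ | ∃ (V : Type) (_ : Fintype V) (G : SimpleGraph V),
        homCount (cycleGraph 4) G ≠ 0 ∧
        ∀ j : Fin (ℓ - 1), v j =
          (homCount (cycleGraph (4 * ((j : ℕ) + 2))) G : ℝ) /
            (homCount (cycleGraph 4) G : ℝ) ^ ((j : ℕ) + 2)} = powerSumProfile ℓ :=
  cycle_ratio_profile_eq_powerSumProfile_general ℓ
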